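/- Let C = (1+2v²)C₁ ⊕ (2v+2v²)C₂ ⊕ (v+2v²)C₃ be a linear code of length n over R, where C₁, C₂, C₃ are ternary linear codes of length n. Then C is a negacyclic code over R if and only if C₁, C₂ and C₃ are negacyclic codes over Z₃. -/

import Mathlib

/-- The ring `R = Z₃ + vZ₃ + v²Z₃ = Z₃[v]/(v³ - v)`, with elements written
`a + v*b + v²*c` for `a b c : ZMod 3` (stored as the three coordinates). -/
@[ext]
structure R3 : Type where
  a : ZMod 3
  b : ZMod 3
  c : ZMod 3
  deriving DecidableEq

namespace R3

instance : Zero R3 := ⟨⟨0, 0, 0⟩⟩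
instance : One R3 := ⟨⟨1, 0, 0⟩⟩
instance : Add R3 := ⟨fun x y => ⟨x.a + y.a, x.b + y.b, x.c + y.c⟩⟩
instance : Neg R3 := ⟨fun x => ⟨-x.a, -x.b, -x.c⟩⟩
/-- Multiplication induced by `v³ = v` :
`(a+vb+v²c)(a'+vb'+v²c') = aa' + v(ab'+a'b+bc'+b'c) + v²(ac'+a'c+bb'+cc')`. -/
instance : Mul R3 := ⟨fun x y =>
  ⟨x.a * y.a,
   x.a * y.b + x.b * y.a + x.b * y.c + x.c * y.b,
   x.a * y.c + x.c * y.a + x.b * y.b + x.c * y.c⟩⟩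

@[simp] lemma zero_a : (0 : R3).a = 0 := rfl
@[simp] lemma zero_b : (0 : R3).b = 0 := rfl
@[simp] lemma zero_c : (0 : R3).c = 0 := rfl
@[simp] lemma one_a : (1 : R3).a = 1 := rfl
@[simp] lemma one_b : (1 : R3).b = 0 := rfl
@[simp] lemma one_c : (1 : R3).c = 0 := rfl
@[simp] lemma add_a (x y : R3) : (x + y).a = x.a + y.a := rfl
@[simp] lemma add_b (x y : R3) : (x + y).b = x.b + y.b := rfl
@[simp] lemma add_c (x y : R3) : (x + y).c = x.c + y.c := rfl
@[simp] lemma neg_a (x : R3) : (-x).a = -x.a := rfl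
@[simp] lemma neg_b (x : R3) : (-x).b = -x.b := rfl
@[simp] lemma neg_c (x : R3) : (-x).c = -x.c := rfl
@[simp] lemma mul_a (x y : R3) : (x * y).a = x.a * y.a := rfl
@[simp] lemma mul_b (x y : R3) :
    (x * y).b = x.a * y.b + x.b * y.a + x.b * y.c + x.c * y.b := rfl
@[simp] lemma mul_c (x y : R3) :
    (x * y).c = x.a * y.c + x.c * y.a + x.b * y.b + x.c * y.c := rfl

private lemma thm_add_assoc (x y z : R3) : x + y + z = x + (y + z) := by ext <;> simp <;> ring
private lemma thm_zero_add (x : R3) : 0 + x = x := by ext <;> simp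
private lemma thm_add_zero (x : R3) : x + 0 = x := by ext <;> simp
private lemma thm_add_comm (x y : R3) : x + y = y + x := by ext <;> simp <;> ring
private lemma thm_mul_assoc (x y z : R3) : x * y * z = x * (y * z) := by ext <;> simp <;> ring
private lemma thm_one_mul (x : R3) : 1 * x = x := by ext <;> simp
private lemma thm_mul_one (x : R3) : x * 1 = x := by ext <;> simp
private lemma thm_left_distrib (x y z : R3) : x * (y + z) = x * y + x * z := by ext <;> simp <;> ring
private lemma thm_right_distrib (x y z : R3) : (x + y) * z = x * z + y * z := by ext <;> simp <;> ring
private lemma thm_mul_comm (x y : R3) : x * y = y * x := by ext <;> simp <;> ring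
private lemma thm_zero_mul (x : R3) : 0 * x = 0 := by ext <;> simp
private lemma thm_mul_zero (x : R3) : x * 0 = 0 := by ext <;> simp
private lemma thm_neg_add_cancel (x : R3) : -x + x = 0 := by ext <;> simp

instance : CommRing R3 where
  nsmul m x := ⟨m • x.a, m • x.b, m • x.c⟩
  nsmul_zero x := R3.ext (zero_smul ℕ x.a) (zero_smul ℕ x.b) (zero_smul ℕ x.c)
  nsmul_succ m x := R3.ext (succ_nsmul x.a m) (succ_nsmul x.b m) (succ_nsmul x.c m)
  zsmul m x := ⟨m • x.a, m • x.b, m • x.c⟩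
  zsmul_zero' x := R3.ext (zero_smul ℤ x.a) (zero_smul ℤ x.b) (zero_smul ℤ x.c)
  zsmul_succ' m x := by ext <;> (show _ • _ = _ • _ + _; simp [add_smul]; try ring)
  zsmul_neg' m x := by ext <;> (show _ • _ = -(_ • _); simp; try ring)
  add_assoc := thm_add_assoc
  zero_add := thm_zero_add
  add_zero := thm_add_zero
  add_comm := thm_add_comm
  mul_assoc := thm_mul_assoc
  one_mul := thm_one_mul
  mul_one := thm_mul_one
  left_distrib := thm_left_distrib
  right_distrib := thm_right_distrib
  mul_comm := thm_mul_comm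
  zero_mul := thm_zero_mul
  mul_zero := thm_mul_zero
  neg_add_cancel := thm_neg_add_cancel

/-- The element `v` of `R = Z₃[v]/(v³-v)`. -/
def v : R3 := ⟨0, 1, 0⟩

/-- The natural inclusion `Z₃ → R`. -/
def iota : ZMod 3 →+* R3 where
  toFun t := ⟨t, 0, 0⟩
  map_one' := by ext <;> simp
  map_mul' x y := by ext <;> simp
  map_zero' := by ext <;> simp
  map_add' x y := by ext <;> simp

instance : Algebra (ZMod 3) R3 := iota.toAlgebra

end R3

open R3 in
/-- The Gray map `φ : R → Z₃³`, `φ(a+vb+v²c) = (a, a+b+c, a+2b+c)`. -/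
def gray (r : R3) : ZMod 3 × ZMod 3 × ZMod 3 :=
  (r.a, r.a + r.b + r.c, r.a + 2 * r.b + r.c)

/-- The Gray map extended blockwise to `φ : R^n → Z₃^{3n}`, where `Z₃^{3n}` is
identified with `Z₃^n × Z₃^n × Z₃^n` via the three length-`n` blocks. -/
def grayV {n : ℕ} (r : Fin n → R3) :
    (Fin n → ZMod 3) × (Fin n → ZMod 3) × (Fin n → ZMod 3) :=
  (fun i => (r i).a,
   fun i => (r i).a + (r i).b + (r i).c,
   fun i => (r i).a + 2 * (r i).b + (r i).c)

/-- Hamming weight on `Z₃^{3n} = Z₃^n × Z₃^n × Z₃^n`. -/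
def wtH {n : ℕ} (x : (Fin n → ZMod 3) × (Fin n → ZMod 3) × (Fin n → ZMod 3)) : ℕ :=
  hammingNorm x.1 + hammingNorm x.2.1 + hammingNorm x.2.2

/-- The Lee weight of an element of `R`: the Hamming weight of its Gray image. -/
def wtLee (r : R3) : ℕ :=
  (if r.a ≠ 0 then 1 else 0) + (if r.a + r.b + r.c ≠ 0 then 1 else 0) +
    (if r.a + 2 * r.b + r.c ≠ 0 then 1 else 0)

/-- The Lee weight on `R^n`, extended additively. -/
def wtLeeV {n : ℕ} (x : Fin n → R3) : ℕ := ∑ i, wtLee (x i)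

/-- The cyclic shift `σ(c₀,…,c_{n-1}) = (c_{n-1},c₀,…,c_{n-2})`. -/
def cyc {α : Type*} {n : ℕ} [NeZero n] (c : Fin n → α) : Fin n → α :=
  fun i => c (i - 1)

/-- The negacyclic shift `η(c₀,…,c_{n-1}) = (-c_{n-1},c₀,…,c_{n-2})`. -/
def nega {α : Type*} [Neg α] {n : ℕ} [NeZero n] (c : Fin n → α) : Fin n → α :=
  fun i => if i = 0 then -c (i - 1) else c (i - 1)

/-- The `λ`-constacyclic shift `(c₀,…,c_{n-1}) ↦ (λc_{n-1},c₀,…,c_{n-2})`. -/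
def consta {α : Type*} [Mul α] {n : ℕ} [NeZero n] (lam : α) (c : Fin n → α) : Fin n → α :=
  fun i => if i = 0 then lam * c (i - 1) else c (i - 1)

open Fin.NatCast in
/-- The quasi-cyclic shift `τ_{s,l}` of block length `l` on vectors of length `n = s*l`,
moving the last block of `l` coordinates to the front; equivalently, the cyclic shift
by `l` positions. -/
def shiftBy {α : Type*} {n : ℕ} [NeZero n] (l : ℕ) (c : Fin n → α) : Fin n → α :=
  fun i => c (i - (l : Fin n))

/-- Apply a map to each of the three blocks of `Z₃^{3n} = Z₃^n × Z₃^n × Z₃^n`. -/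
def blockMap {n : ℕ} (f : (Fin n → ZMod 3) → (Fin n → ZMod 3))
    (x : (Fin n → ZMod 3) × (Fin n → ZMod 3) × (Fin n → ZMod 3)) :
    (Fin n → ZMod 3) × (Fin n → ZMod 3) × (Fin n → ZMod 3) :=
  (f x.1, f x.2.1, f x.2.2)

/-- The Euclidean dual of a linear code over `R`. -/
def dualR {n : ℕ} (C : Submodule R3 (Fin n → R3)) : Submodule R3 (Fin n → R3) where
  carrier := {x | ∀ y ∈ C, ∑ i, x i * y i = 0}
  add_mem' := by
    intro p q hp hq y hy
    simp only [Set.mem_setOf_eq] at *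
    simp [Pi.add_apply, add_mul, Finset.sum_add_distrib, hp y hy, hq y hy]
  zero_mem' := by intro y hy; simp
  smul_mem' := by
    intro r p hp y hy
    simp only [Set.mem_setOf_eq] at *
    simp [Pi.smul_apply, smul_eq_mul, mul_assoc, ← Finset.mul_sum, hp y hy]

/-- The Euclidean dual of a ternary linear code. -/
def dualZ {n : ℕ} (C : Submodule (ZMod 3) (Fin n → ZMod 3)) :
    Submodule (ZMod 3) (Fin n → ZMod 3) where
  carrier := {x | ∀ y ∈ C, ∑ i, x i * y i = 0}
  add_mem' := by
    intro p q hp hq y hy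
    simp only [Set.mem_setOf_eq] at *
    simp [Pi.add_apply, add_mul, Finset.sum_add_distrib, hp y hy, hq y hy]
  zero_mem' := by intro y hy; simp
  smul_mem' := by
    intro r p hp y hy
    simp only [Set.mem_setOf_eq] at *
    simp [Pi.smul_apply, smul_eq_mul, mul_assoc, ← Finset.mul_sum, hp y hy]

/-- The Euclidean inner product on `Z₃^{3n} = Z₃^n × Z₃^n × Z₃^n`. -/
def inner3 {n : ℕ} (x y : (Fin n → ZMod 3) × (Fin n → ZMod 3) × (Fin n → ZMod 3)) : ZMod 3 :=
  ∑ i, x.1 i * y.1 i + ∑ i, x.2.1 i * y.2.1 i + ∑ i, x.2.2 i * y.2.2 i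

/-- The Euclidean dual (as a set) of a subset of `Z₃^{3n}`. -/
def dual3Set {n : ℕ} (S : Set ((Fin n → ZMod 3) × (Fin n → ZMod 3) × (Fin n → ZMod 3))) :
    Set ((Fin n → ZMod 3) × (Fin n → ZMod 3) × (Fin n → ZMod 3)) :=
  {x | ∀ y ∈ S, inner3 x y = 0}

/-- The first associated ternary code `C₁ = {a : ∃ b c, a+vb+v²c ∈ C}`. -/
def assoc1 {n : ℕ} (C : Set (Fin n → R3)) : Set (Fin n → ZMod 3) :=
  {x | ∃ r ∈ C, ∀ i, x i = (r i).a}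

/-- The second associated ternary code `C₂ = {a+b+c : a+vb+v²c ∈ C}`. -/
def assoc2 {n : ℕ} (C : Set (Fin n → R3)) : Set (Fin n → ZMod 3) :=
  {x | ∃ r ∈ C, ∀ i, x i = (r i).a + (r i).b + (r i).c}

/-- The third associated ternary code `C₃ = {a+2b+c : a+vb+v²c ∈ C}`. -/
def assoc3 {n : ℕ} (C : Set (Fin n → R3)) : Set (Fin n → ZMod 3) :=
  {x | ∃ r ∈ C, ∀ i, x i = (r i).a + 2 * (r i).b + (r i).c}

/-- The idempotent `e₁ = 1 + 2v²` of `R`. -/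
noncomputable def e1 : R3 := 1 + 2 * R3.v ^ 2
/-- The idempotent `e₂ = 2v + 2v²` of `R`. -/
noncomputable def e2 : R3 := 2 * R3.v + 2 * R3.v ^ 2
/-- The idempotent `e₃ = v + 2v²` of `R`. -/
noncomputable def e3 : R3 := R3.v + 2 * R3.v ^ 2

/-- Coordinatewise inclusion `Z₃^n → R^n`. -/
def emb {n : ℕ} (x : Fin n → ZMod 3) : Fin n → R3 := fun i => R3.iota (x i)

/-- The code `(1+2v²)C₁ ⊕ (2v+2v²)C₂ ⊕ (v+2v²)C₃ ⊆ R^n` built from three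
ternary codes `C₁, C₂, C₃ ⊆ Z₃^n`. -/
def tri {n : ℕ} (C₁ C₂ C₃ : Set (Fin n → ZMod 3)) : Set (Fin n → R3) :=
  {w | ∃ x ∈ C₁, ∃ y ∈ C₂, ∃ z ∈ C₃, w = e1 • emb x + e2 • emb y + e3 • emb z}

open Polynomial in
/-- The polynomial representation `(c₀,…,c_{n-1}) ↦ c₀ + c₁x + … + c_{n-1}x^{n-1}`
of a vector over `Z₃`. -/
noncomputable def toPolyZ {n : ℕ} (c : Fin n → ZMod 3) : Polynomial (ZMod 3) :=
  ∑ i : Fin n, Polynomial.C (c i) * Polynomial.X ^ (i : ℕ)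

open Polynomial in
/-- The polynomial representation of a vector over `R`. -/
noncomputable def toPolyR {n : ℕ} (c : Fin n → R3) : Polynomial R3 :=
  ∑ i : Fin n, Polynomial.C (c i) * Polynomial.X ^ (i : ℕ)

/-- The quotient map `Z₃[x] → Z₃[x]/(xⁿ - ε)`. -/
noncomputable def mkZ (n : ℕ) (ε : ZMod 3) :
    Polynomial (ZMod 3) →+*
      Polynomial (ZMod 3) ⧸ Ideal.span {Polynomial.X ^ n - Polynomial.C ε} :=
  Ideal.Quotient.mk _

/-- The quotient map `R[x] → R[x]/(xⁿ - ε)`. -/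
noncomputable def mkR (n : ℕ) (ε : R3) :
    Polynomial R3 →+* Polynomial R3 ⧸ Ideal.span {Polynomial.X ^ n - Polynomial.C ε} :=
  Ideal.Quotient.mk _

/-- `f` is the generator polynomial of the ternary cyclic (`ε = 1`) resp. negacyclic
(`ε = -1`) code `D` of length `n`: `f` is a monic divisor of `xⁿ - ε` and, under the
polynomial representation, `D` corresponds exactly to the ideal of `Z₃[x]/(xⁿ - ε)`
generated by `f`. -/
def IsGenPolyZ (n : ℕ) (ε : ZMod 3) (D : Set (Fin n → ZMod 3))
    (f : Polynomial (ZMod 3)) : Prop :=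
  f.Monic ∧ f ∣ (Polynomial.X ^ n - Polynomial.C ε) ∧
    {p | ∃ c ∈ D, p = mkZ n ε (toPolyZ c)} = ↑(Ideal.span {mkZ n ε f})

/-!
The Gray map `a + vb + v²c ↦ (a, a+b+c, a+2b+c)` is a bijection `R^n ≃ Z₃^n × Z₃^n × Z₃^n`
whose inverse is `(x, y, z) ↦ e₁x + e₂y + e₃z`: the Gray images of the idempotents
`e₁ = 1+2v²`, `e₂ = 2v+2v²`, `e₃ = v+2v²` are the three unit vectors. Hence the Gray map carries
`C` onto `C₁ × C₂ × C₃`, and it intertwines `η` on `R^n` with `η` applied blockwise. So `η(C) = C`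
iff `η(C₁) × η(C₂) × η(C₃) = C₁ × C₂ × C₃`, which for nonempty codes means `η(Cᵢ) = Cᵢ` for each `i`.
-/

open Function Set

theorem Function.Semiconj.image_preimage_eq_self_iff {α β : Type*} {e : α ≃ β} {f : α → α}
    {g : β → β} (h : Semiconj e f g) (S : Set β) :
    f '' (e ⁻¹' S) = e ⁻¹' S ↔ g '' S = S := by
  have h' : Semiconj e.symm g f := h.inverse_left e.left_inv e.right_inv
  rw [← e.image_symm_eq_preimage, ← h'.set_image S]
  exact e.symm.injective.image_injective.eq_iff

theorem blockMap_image_prod {n : ℕ} (f : (Fin n → ZMod 3) → Fin n → ZMod 3)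
    (A B D : Set (Fin n → ZMod 3)) :
    blockMap f '' (A ×ˢ B ×ˢ D) = (f '' A) ×ˢ (f '' B) ×ˢ (f '' D) := by
  rw [prod_image_image_eq, prod_image_image_eq]
  rfl

theorem e1_eq : e1 = ⟨1, 0, 2⟩ := by decide

theorem e2_eq : e2 = ⟨0, 2, 2⟩ := by decide

theorem e3_eq : e3 = ⟨0, 1, 2⟩ := by decide

theorem idempotentSum_apply {n : ℕ} (x y z : Fin n → ZMod 3) (i : Fin n) :
    (e1 • emb x + e2 • emb y + e3 • emb z) i =
      ⟨x i, 2 * y i + z i, 2 * x i + 2 * y i + 2 * z i⟩ := by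
  change e1 * ⟨x i, 0, 0⟩ + e2 * ⟨y i, 0, 0⟩ + e3 * ⟨z i, 0, 0⟩ = _
  rw [e1_eq, e2_eq, e3_eq]
  ext <;> simp

noncomputable def grayEquiv (n : ℕ) :
    (Fin n → R3) ≃ (Fin n → ZMod 3) × (Fin n → ZMod 3) × (Fin n → ZMod 3) where
  toFun := grayV
  invFun x := e1 • emb x.1 + e2 • emb x.2.1 + e3 • emb x.2.2
  left_inv w := by
    funext i
    dsimp only
    rw [idempotentSum_apply]
    ext <;> simp only [grayV] <;> ring_nf <;> reduce_mod_char
  right_inv x := by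
    ext i <;> simp only [grayV, idempotentSum_apply] <;> ring_nf <;> reduce_mod_char

theorem tri_eq_preimage_grayEquiv {n : ℕ} (C₁ C₂ C₃ : Set (Fin n → ZMod 3)) :
    tri C₁ C₂ C₃ = grayEquiv n ⁻¹' (C₁ ×ˢ C₂ ×ˢ C₃) := by
  ext w
  constructor
  · rintro ⟨x, hx, y, hy, z, hz, rfl⟩
    have hgray : grayEquiv n (e1 • emb x + e2 • emb y + e3 • emb z) = (x, y, z) :=
      (grayEquiv n).apply_symm_apply (x, y, z)
    rw [mem_preimage, hgray]
    exact ⟨hx, hy, hz⟩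
  · rintro ⟨h₁, h₂, h₃⟩
    exact ⟨_, h₁, _, h₂, _, h₃, ((grayEquiv n).symm_apply_apply w).symm⟩

theorem grayEquiv_semiconj_nega (n : ℕ) [NeZero n] :
    Semiconj (grayEquiv n) nega (blockMap nega) := by
  intro w
  ext i <;> by_cases hi : i = 0 <;>
    simp only [grayEquiv, Equiv.coe_fn_mk, grayV, blockMap, nega, hi, ↓reduceIte, R3.neg_a,
      R3.neg_b, R3.neg_c] <;> ring

/-- Let `C = (1+2v²)C₁ ⊕ (2v+2v²)C₂ ⊕ (v+2v²)C₃` be a linear code of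
length `n` over `R`, built from ternary linear codes `C₁, C₂, C₃`. Then `C` is
negacyclic over `R` iff `C₁`, `C₂` and `C₃` are negacyclic over `Z₃`. -/
theorem statement9 (n : ℕ) [NeZero n] (C : Submodule R3 (Fin n → R3))
    (C₁ C₂ C₃ : Submodule (ZMod 3) (Fin n → ZMod 3))
    (hC : (C : Set (Fin n → R3)) = tri (C₁ : Set (Fin n → ZMod 3)) C₂ C₃) :
    nega '' (C : Set (Fin n → R3)) = (C : Set (Fin n → R3)) ↔
      (nega '' (C₁ : Set (Fin n → ZMod 3)) = (C₁ : Set (Fin n → ZMod 3)) ∧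
       nega '' (C₂ : Set (Fin n → ZMod 3)) = (C₂ : Set (Fin n → ZMod 3)) ∧
       nega '' (C₃ : Set (Fin n → ZMod 3)) = (C₃ : Set (Fin n → ZMod 3))) := by
  have hnonempty : ((nega '' (C₁ : Set (Fin n → ZMod 3))) ×ˢ
      (nega '' (C₂ : Set (Fin n → ZMod 3))) ×ˢ (nega '' (C₃ : Set (Fin n → ZMod 3)))).Nonempty :=
    ⟨(nega 0, nega 0, nega 0), mem_image_of_mem _ (zero_mem C₁),
      mem_image_of_mem _ (zero_mem C₂), mem_image_of_mem _ (zero_mem C₃)⟩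
  rw [hC, tri_eq_preimage_grayEquiv,
    (grayEquiv_semiconj_nega n).image_preimage_eq_self_iff, blockMap_image_prod,
    prod_eq_prod_iff_of_nonempty hnonempty, prod_eq_prod_iff_of_nonempty hnonempty.snd]
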